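/- Let L be the subgroup of GL₄(ℚ) generated by the four matrices D₁, D₂, M, E (the two Dehn-twist operators and the m-loop and e-loop operators of the toric code on the torus, in the skein basis). Then L equals the set of all 4×4 signed permutation matrices with an even number of −1 entries; that is, L = { A : there exist σ ∈ Equiv.Perm (Fin 4) and ε : Fin 4 → {1,−1} with ε₀·ε₁·ε₂·ε₃ = 1 such that A i j = ε i if j = σ i and A i j = 0 otherwise }. In particular L has order 192. -/

import Mathlib

/-- First Dehn twist operator on the toric-code ground space (skein basis). -/
def dehn₁ : Matrix (Fin 4) (Fin 4) ℚ := !![1,0,0,0; 0,1,0,0; 0,0,0,1; 0,0,1,0]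

/-- Second Dehn twist operator. -/
def dehn₂ : Matrix (Fin 4) (Fin 4) ℚ := !![1,0,0,0; 0,0,1,0; 0,1,0,0; 0,0,0,1]

/-- Horizontal `m`-anyon loop operator. -/
def mLoop : Matrix (Fin 4) (Fin 4) ℚ := !![0,1,0,0; 1,0,0,0; 0,0,0,1; 0,0,1,0]

/-- Horizontal `e`-anyon loop operator. -/
def eLoop : Matrix (Fin 4) (Fin 4) ℚ := !![1,0,0,0; 0,1,0,0; 0,0,-1,0; 0,0,0,-1]

lemma dehn₁_sq : dehn₁ * dehn₁ = 1 := by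
  ext i j
  fin_cases i <;> fin_cases j <;>
    norm_num [dehn₁, Matrix.mul_apply, Fin.sum_univ_four, Matrix.one_apply,
      Matrix.vecHead, Matrix.vecTail, Fin.ext_iff] <;> simp

lemma dehn₂_sq : dehn₂ * dehn₂ = 1 := by
  ext i j
  fin_cases i <;> fin_cases j <;>
    norm_num [dehn₂, Matrix.mul_apply, Fin.sum_univ_four, Matrix.one_apply,
      Matrix.vecHead, Matrix.vecTail, Fin.ext_iff] <;> simp

lemma mLoop_sq : mLoop * mLoop = 1 := by
  ext i j
  fin_cases i <;> fin_cases j <;>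
    norm_num [mLoop, Matrix.mul_apply, Fin.sum_univ_four, Matrix.one_apply,
      Matrix.vecHead, Matrix.vecTail, Fin.ext_iff] <;> simp

lemma eLoop_sq : eLoop * eLoop = 1 := by
  ext i j
  fin_cases i <;> fin_cases j <;>
    norm_num [eLoop, Matrix.mul_apply, Fin.sum_univ_four, Matrix.one_apply,
      Matrix.vecHead, Matrix.vecTail, Fin.ext_iff] <;> simp

/-- `D₁` as an element of `GL₄(ℚ)`. -/
def D₁ : GL (Fin 4) ℚ := ⟨dehn₁, dehn₁, dehn₁_sq, dehn₁_sq⟩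

/-- `D₂` as an element of `GL₄(ℚ)`. -/
def D₂ : GL (Fin 4) ℚ := ⟨dehn₂, dehn₂, dehn₂_sq, dehn₂_sq⟩

/-- `M` as an element of `GL₄(ℚ)`. -/
def M : GL (Fin 4) ℚ := ⟨mLoop, mLoop, mLoop_sq, mLoop_sq⟩

/-- `E` as an element of `GL₄(ℚ)`. -/
def E : GL (Fin 4) ℚ := ⟨eLoop, eLoop, eLoop_sq, eLoop_sq⟩

/-- The subgroup of `GL₄(ℚ)` generated by the two Dehn twists and the two anyon loops. -/
def L : Subgroup (GL (Fin 4) ℚ) := Subgroup.closure {D₁, D₂, M, E}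

/-!
The generators are signed permutation matrices with an even number of `-1` entries: `D₁`, `D₂`
and `M` are the permutation matrices of `(2 3)`, `(1 2)` and `(0 1)(2 3)`, and
`E = diag(1, 1, -1, -1)`. Conversely, `D₁ M`, `D₂` and `D₁` are the adjacent transpositions, which
generate `S₄`; conjugating `E` by permutation matrices gives every diagonal matrix with two `-1`
entries, and every even sign vector of length four is a product of two of these. Since
`(σ, ε) ↦ diag(ε) P_σ` is injective, the group has `4! · 2³ = 192` elements.
-/

open Equiv Matrix

section SignedPermutation

variable {n R : Type*} [CommRing R]

lemma Int.cast_units_injective (h : (1 : R) ≠ -1) :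
    Function.Injective fun u : ℤˣ => ((u : ℤ) : R) := by
  intro u v huv
  rcases Int.units_eq_one_or u with rfl | rfl <;> rcases Int.units_eq_one_or v with rfl | rfl <;>
    simp_all [eq_comm]

def signVec : (n → ℤˣ) →* (n → R) :=
  ((Int.castRingHom R).toMonoidHom.comp (Units.coeHom ℤ)).compLeft n

@[simp]
lemma signVec_apply (u : n → ℤˣ) (i : n) : (signVec u i : R) = ((u i : ℤ) : R) := rfl

lemma exists_signVec_eq {ε : n → R} (hε : ∀ i, ε i = 1 ∨ ε i = -1) :
    ∃ u : n → ℤˣ, signVec u = ε := by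
  classical
  refine ⟨fun i => if ε i = 1 then 1 else -1, funext fun i => ?_⟩
  rcases hε i with hi | hi
  · simp [hi]
  · by_cases h1 : (-1 : R) = 1 <;> simp [hi, h1]

variable [Fintype n]

lemma prod_signVec (u : n → ℤˣ) : ∏ i, (signVec u i : R) = (((∏ i, u i : ℤˣ) : ℤ) : R) := by
  simp

variable [DecidableEq n]

def signedPermMatrix (σ : Perm n) (u : n → ℤˣ) : Matrix n n R :=
  diagonal (signVec u) * σ.permMatrix R

lemma signedPermMatrix_apply (σ : Perm n) (u : n → ℤˣ) (i j : n) :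
    (signedPermMatrix σ u : Matrix n n R) i j = if j = σ i then ((u i : ℤ) : R) else 0 := by
  simp [signedPermMatrix, PEquiv.toMatrix_apply, eq_comm]

lemma permMatrix_mul_diagonal (σ : Perm n) (d : n → R) :
    σ.permMatrix R * diagonal d = diagonal (d ∘ σ) * σ.permMatrix R := by
  ext i j
  rcases eq_or_ne (σ i) j with rfl | h <;> simp [PEquiv.toMatrix_apply, *]

lemma signedPermMatrix_mul (σ τ : Perm n) (u v : n → ℤˣ) :
    (signedPermMatrix σ u * signedPermMatrix τ v : Matrix n n R) =
      signedPermMatrix (τ * σ) (u * v ∘ σ) := by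
  rw [signedPermMatrix, signedPermMatrix, signedPermMatrix, Matrix.mul_assoc,
    ← Matrix.mul_assoc (σ.permMatrix R), permMatrix_mul_diagonal, Matrix.mul_assoc,
    ← Matrix.mul_assoc (diagonal _), diagonal_mul_diagonal', ← Matrix.permMatrix_mul, map_mul]
  rfl

@[simp]
lemma signedPermMatrix_one : (signedPermMatrix 1 1 : Matrix n n R) = 1 := by
  simp [signedPermMatrix]

def signedPermUnit (σ : Perm n) (u : n → ℤˣ) : GL n R where
  val := signedPermMatrix σ u
  inv := signedPermMatrix σ⁻¹ (u⁻¹ ∘ ⇑σ⁻¹)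
  val_inv := by
    rw [signedPermMatrix_mul, inv_mul_cancel, ← signedPermMatrix_one]
    congr 1
    ext1 i
    simp
  inv_val := by
    rw [signedPermMatrix_mul, mul_inv_cancel, ← signedPermMatrix_one]
    congr 1
    ext1 i
    simp

@[simp]
lemma val_signedPermUnit (σ : Perm n) (u : n → ℤˣ) :
    ((signedPermUnit σ u : GL n R) : Matrix n n R) = signedPermMatrix σ u := rfl

lemma signedPermUnit_mul (σ τ : Perm n) (u v : n → ℤˣ) :
    (signedPermUnit σ u * signedPermUnit τ v : GL n R) = signedPermUnit (τ * σ) (u * v ∘ σ) :=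
  Units.ext (signedPermMatrix_mul σ τ u v)

@[simp]
lemma signedPermUnit_one : (signedPermUnit 1 1 : GL n R) = 1 :=
  Units.ext signedPermMatrix_one

lemma signedPermUnit_inv (σ : Perm n) (u : n → ℤˣ) :
    (signedPermUnit σ u : GL n R)⁻¹ = signedPermUnit σ⁻¹ (u⁻¹ ∘ ⇑σ⁻¹) :=
  Units.ext rfl

lemma signedPermUnit_eq_sign_mul_perm (σ : Perm n) (u : n → ℤˣ) :
    (signedPermUnit σ u : GL n R) = signedPermUnit 1 u * signedPermUnit σ 1 := by
  rw [signedPermUnit_mul]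
  simp

lemma eq_signedPermUnit_of_apply {A : GL n R} {σ : Perm n} {u : n → ℤˣ}
    (h : ∀ i j, (A : Matrix n n R) i j = if j = σ i then ((u i : ℤ) : R) else 0) :
    A = signedPermUnit σ u :=
  Units.ext <| Matrix.ext fun i j => (h i j).trans (signedPermMatrix_apply σ u i j).symm

lemma signedPermUnit_perm_mul_perm (σ τ : Perm n) :
    (signedPermUnit σ 1 * signedPermUnit τ 1 : GL n R) = signedPermUnit (τ * σ) 1 := by
  rw [signedPermUnit_mul]
  simp

lemma signedPermUnit_sign_mul_sign (u v : n → ℤˣ) :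
    (signedPermUnit 1 u * signedPermUnit 1 v : GL n R) = signedPermUnit 1 (u * v) := by
  rw [signedPermUnit_mul]
  simp

lemma signedPermUnit_conj (σ : Perm n) (u : n → ℤˣ) :
    (signedPermUnit σ 1 * signedPermUnit 1 u * (signedPermUnit σ 1)⁻¹ : GL n R) =
      signedPermUnit 1 (u ∘ σ) := by
  rw [signedPermUnit_inv, signedPermUnit_mul, signedPermUnit_mul]
  simp

lemma signedPermUnit_inj (h : (1 : R) ≠ -1) {σ τ : Perm n} {u v : n → ℤˣ} :
    (signedPermUnit σ u : GL n R) = signedPermUnit τ v ↔ σ = τ ∧ u = v := by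
  refine ⟨fun huv => ?_, fun ⟨hστ, huv⟩ => hστ ▸ huv ▸ rfl⟩
  have hentry (i : n) : ((u i : ℤ) : R) = if σ i = τ i then ((v i : ℤ) : R) else 0 := by
    have := congrArg (fun A : GL n R => (A : Matrix n n R) i (σ i)) huv
    simpa [signedPermMatrix_apply, eq_comm] using this
  have hne (w : ℤˣ) : ((w : ℤ) : R) ≠ 0 := by
    have h10 : (1 : R) ≠ 0 := fun h0 => h (by rw [h0, neg_zero])
    rcases Int.units_eq_one_or w with rfl | rfl <;> simpa
  have hσ (i : n) : σ i = τ i := by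
    by_contra hi
    exact hne (u i) (by simpa [hi] using hentry i)
  have hu (i : n) : u i = v i := Int.cast_units_injective h (by simpa [hσ i] using hentry i)
  exact ⟨Equiv.ext hσ, funext hu⟩

variable (n R) in
def evenSignedPermGroup : Subgroup (GL n R) where
  carrier := Set.range fun p : Perm n × {u : n → ℤˣ // ∏ i, u i = 1} => signedPermUnit p.1 p.2.1
  one_mem' := ⟨(1, ⟨1, by simp⟩), signedPermUnit_one⟩
  mul_mem' := by
    rintro _ _ ⟨⟨σ, u, hu⟩, rfl⟩ ⟨⟨τ, v, hv⟩, rfl⟩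
    refine ⟨(τ * σ, ⟨u * v ∘ σ, ?_⟩), (signedPermUnit_mul σ τ u v).symm⟩
    simp [Finset.prod_mul_distrib, Equiv.prod_comp σ, hu, hv]
  inv_mem' := by
    rintro _ ⟨⟨σ, u, hu⟩, rfl⟩
    refine ⟨(σ⁻¹, ⟨u⁻¹ ∘ ⇑σ⁻¹, ?_⟩), (signedPermUnit_inv σ u).symm⟩
    simp [Equiv.prod_comp σ.symm u, hu]

lemma signedPermUnit_mem_evenSignedPermGroup (σ : Perm n) {u : n → ℤˣ} (hu : ∏ i, u i = 1) :
    (signedPermUnit σ u : GL n R) ∈ evenSignedPermGroup n R :=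
  ⟨(σ, ⟨u, hu⟩), rfl⟩

lemma card_evenSignedPermGroup (h : (1 : R) ≠ -1) :
    Nat.card (evenSignedPermGroup n R) =
      Nat.card (Perm n) * Nat.card {u : n → ℤˣ // ∏ i, u i = 1} := by
  have hinj : Function.Injective fun p : Perm n × {u : n → ℤˣ // ∏ i, u i = 1} =>
        (signedPermUnit p.1 p.2.1 : GL n R) := fun p q hpq =>
    have hpq' := (signedPermUnit_inj h).1 hpq
    Prod.ext hpq'.1 (Subtype.ext hpq'.2)
  rw [← Nat.card_prod, ← Nat.card_range_of_injective hinj]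
  rfl

lemma mem_evenSignedPermGroup_iff (h : (1 : R) ≠ -1) (A : GL n R) :
    A ∈ evenSignedPermGroup n R ↔
      ∃ (σ : Perm n) (ε : n → R), (∀ i, ε i = 1 ∨ ε i = -1) ∧ ∏ i, ε i = 1 ∧
        ∀ i j, (A : Matrix n n R) i j = if j = σ i then ε i else 0 := by
  constructor
  · rintro ⟨⟨σ, u, hu⟩, rfl⟩
    refine ⟨σ, signVec u, fun i => ?_, ?_, signedPermMatrix_apply σ u⟩
    · rcases Int.units_eq_one_or (u i) with hi | hi <;> simp [hi]
    · rw [prod_signVec, hu, Units.val_one, Int.cast_one]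
  · rintro ⟨σ, ε, hε, hprod, hA⟩
    obtain ⟨u, rfl⟩ := exists_signVec_eq hε
    have hu : ∏ i, u i = 1 := Int.cast_units_injective h (by simpa [prod_signVec] using hprod)
    exact ⟨(σ, ⟨u, hu⟩), (eq_signedPermUnit_of_apply hA).symm⟩

end SignedPermutation

def eSigns : Fin 4 → ℤˣ := ![1, 1, -1, -1]

lemma D₁_eq_signedPermUnit : D₁ = signedPermUnit (swap 2 3) 1 :=
  eq_signedPermUnit_of_apply fun i j => by fin_cases i <;> fin_cases j <;> decide

lemma D₂_eq_signedPermUnit : D₂ = signedPermUnit (swap 1 2) 1 :=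
  eq_signedPermUnit_of_apply fun i j => by fin_cases i <;> fin_cases j <;> decide

lemma M_eq_signedPermUnit : M = signedPermUnit (swap 0 1 * swap 2 3) 1 :=
  eq_signedPermUnit_of_apply fun i j => by fin_cases i <;> fin_cases j <;> decide

lemma E_eq_signedPermUnit : E = signedPermUnit 1 eSigns :=
  eq_signedPermUnit_of_apply fun i j => by fin_cases i <;> fin_cases j <;> decide

lemma L_le_evenSignedPermGroup : L ≤ evenSignedPermGroup (Fin 4) ℚ := by
  rw [L, Subgroup.closure_le]
  rintro _ (rfl | rfl | rfl | rfl)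
  · rw [D₁_eq_signedPermUnit]; exact signedPermUnit_mem_evenSignedPermGroup _ (by simp)
  · rw [D₂_eq_signedPermUnit]; exact signedPermUnit_mem_evenSignedPermGroup _ (by simp)
  · rw [M_eq_signedPermUnit]; exact signedPermUnit_mem_evenSignedPermGroup _ (by simp)
  · rw [E_eq_signedPermUnit]; exact signedPermUnit_mem_evenSignedPermGroup _ (by decide)

lemma signedPermUnit_perm_mem_L (σ : Perm (Fin 4)) : signedPermUnit σ 1 ∈ L := by
  have hswap (i : Fin 3) : signedPermUnit (swap i.castSucc i.succ) 1 ∈ L := by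
    have hD₁ : D₁ ∈ L := Subgroup.subset_closure (by simp)
    fin_cases i
    · have h01 : swap (0 : Fin 4) 1 = (swap 0 1 * swap 2 3) * swap 2 3 := by decide
      have hM : M ∈ L := Subgroup.subset_closure (by simp)
      change signedPermUnit (swap 0 1) 1 ∈ L
      rw [h01, ← signedPermUnit_perm_mul_perm, ← D₁_eq_signedPermUnit, ← M_eq_signedPermUnit]
      exact mul_mem hD₁ hM
    · change signedPermUnit (swap 1 2) 1 ∈ L
      exact D₂_eq_signedPermUnit ▸ Subgroup.subset_closure (by simp)
    · exact D₁_eq_signedPermUnit ▸ hD₁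
  have hσ : σ ∈ Submonoid.closure (Set.range fun i : Fin 3 => swap i.castSucc i.succ) := by
    rw [Equiv.Perm.mclosure_swap_castSucc_succ]
    trivial
  induction hσ using Submonoid.closure_induction with
  | mem _ h => obtain ⟨i, rfl⟩ := h; exact hswap i
  | one => simp [one_mem]
  | mul σ τ _ _ hσ hτ => rw [← signedPermUnit_perm_mul_perm]; exact mul_mem hτ hσ

-- The even sign vectors are `1`, the six pair flips `eSigns ∘ σ` and `-1`; each is a product of
-- two pair flips.
lemma exists_eq_eSigns_comp_mul_eSigns_comp (u : Fin 4 → ℤˣ) (hu : ∏ i, u i = 1) :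
    ∃ σ τ : Perm (Fin 4), u = eSigns ∘ σ * eSigns ∘ τ := by
  revert u
  decide

lemma signedPermUnit_sign_mem_L {u : Fin 4 → ℤˣ} (hu : ∏ i, u i = 1) : signedPermUnit 1 u ∈ L := by
  have hconj (σ : Perm (Fin 4)) : signedPermUnit 1 (eSigns ∘ σ) ∈ L := by
    rw [← signedPermUnit_conj, ← E_eq_signedPermUnit]
    have hE : E ∈ L := Subgroup.subset_closure (by simp)
    exact mul_mem (mul_mem (signedPermUnit_perm_mem_L σ) hE) (inv_mem (signedPermUnit_perm_mem_L σ))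
  obtain ⟨σ, τ, rfl⟩ := exists_eq_eSigns_comp_mul_eSigns_comp u hu
  rw [← signedPermUnit_sign_mul_sign]
  exact mul_mem (hconj σ) (hconj τ)

lemma evenSignedPermGroup_le_L : evenSignedPermGroup (Fin 4) ℚ ≤ L := by
  rintro _ ⟨⟨σ, u, hu⟩, rfl⟩
  change signedPermUnit σ u ∈ L
  rw [signedPermUnit_eq_sign_mul_perm]
  exact mul_mem (signedPermUnit_sign_mem_L hu) (signedPermUnit_perm_mem_L σ)

/-- `L` is exactly the group of 4×4 signed permutation matrices with an even number of
`−1` entries; in particular it has order 192. -/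
theorem toricCode_logical_operators :
    (∀ A : GL (Fin 4) ℚ, A ∈ L ↔
      ∃ (σ : Equiv.Perm (Fin 4)) (ε : Fin 4 → ℚ),
        (∀ i, ε i = 1 ∨ ε i = -1) ∧
        ε 0 * ε 1 * ε 2 * ε 3 = 1 ∧
        (∀ i j, (A : Matrix (Fin 4) (Fin 4) ℚ) i j = if j = σ i then ε i else 0)) ∧
    Nat.card L = 192 := by
  have hL : L = evenSignedPermGroup (Fin 4) ℚ :=
    le_antisymm L_le_evenSignedPermGroup evenSignedPermGroup_le_L
  have hℚ : (1 : ℚ) ≠ -1 := by norm_num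
  refine ⟨fun A => ?_, ?_⟩
  · simp only [hL, mem_evenSignedPermGroup_iff hℚ, Fin.prod_univ_four]
  · rw [hL, card_evenSignedPermGroup hℚ, Nat.card_perm, Nat.card_fin,
      Nat.card_eq_fintype_card (α := {u // _})]
    decide
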